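/- arXiv:1301.6251 — 2 statements merged into one kernel-verified Lean document; each statement's English description precedes it below -/
import Mathlib

section
/- If f_1, …, f_s ∈ k[X] are polynomials such that k[X]^d = k[f_1, …, f_s] (they generate the ring of constants as a k-algebra), then s ≥ ν(n), the number of minimal elements of the monoid M_n. -/
/-!
The discrete Fourier transform `X_i ↦ ∑_j ε^{ij} X_j` is a linear change of variables conjugating
the cyclotomic derivation into the diagonal derivation `X_j ↦ ε^j X_j`. The constants of the
latter are spanned by the monomials `X^α` with `∑ α_j ε^j = 0`, i.e. with `α ∈ M_n`, so after the
change of variables the generators `f_i` generate the monoid algebra `k[M_n]`. For an indecomposable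
`α ∈ M_n`, the coefficient of `X^α` in a product of two elements of `k[M_n]` only sees their
constant terms; hence the coefficients at the indecomposables of any element of `k[M_n]` are a
linear combination of those of the generators. Since the `X^α` themselves lie in `k[M_n]`, these
`s` coefficient vectors span `k^{ν(n)}`.
-/

open MvPolynomial

/-- The monoid `M_n` of all `α ∈ ℕ^n` with `α_0 + α_1 ε + ⋯ + α_{n-1} ε^{n-1} = 0`. -/
def cycMonoid (n : ℕ) {k : Type*} [Field k] (ε : k) : Set (Fin n → ℕ) :=
  {α | ∑ i : Fin n, (α i : k) * ε ^ (i : ℕ) = 0}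

/-- The set of minimal elements of `M_n`: nonzero elements that are not the sum of two
nonzero elements of `M_n`. -/
def cycMinimal (n : ℕ) {k : Type*} [Field k] (ε : k) : Set (Fin n → ℕ) :=
  {α ∈ cycMonoid n ε | α ≠ 0 ∧
    ¬∃ β γ : Fin n → ℕ, β ∈ cycMonoid n ε ∧ γ ∈ cycMonoid n ε ∧ β ≠ 0 ∧ γ ≠ 0 ∧ α = β + γ}

def indecomposables {M : Type*} [AddMonoid M] (S : Set M) : Set M :=
  {a ∈ S | a ≠ 0 ∧ ∀ b ∈ S, ∀ c ∈ S, a = b + c → b = 0 ∨ c = 0}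

lemma indecomposables_preimage {M N : Type*} [AddMonoid M] [AddMonoid N] (e : M ≃+ N)
    (S : Set N) : indecomposables (e ⁻¹' S) = e ⁻¹' indecomposables S := by
  ext a
  simp only [indecomposables, Set.mem_ofPred_eq, Set.mem_preimage, ne_eq,
    EmbeddingLike.map_eq_zero_iff, e.surjective.forall, ← map_add, e.injective.eq_iff]

lemma cycMinimal_eq_indecomposables (n : ℕ) {k : Type*} [Field k] (ε : k) :
    cycMinimal n ε = indecomposables (cycMonoid n ε) := by
  ext α
  refine and_congr_right fun _ => and_congr_right fun _ => ⟨fun h b hb c hc hbc => ?_, ?_⟩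
  · by_contra! hne
    exact h ⟨b, c, hb, hc, hne.1, hne.2, hbc⟩
  · rintro h ⟨b, c, hb, hc, hb0, hc0, hbc⟩
    rcases h b hb c hc hbc with h0 | h0 <;> contradiction

section Indecomposables

variable {σ R : Type*}

lemma coeff_mul_of_mem_indecomposables [CommSemiring R] {S : Set (σ →₀ ℕ)}
    {p q : MvPolynomial σ R} (hp : ↑p.support ⊆ S) (hq : ↑q.support ⊆ S) {a : σ →₀ ℕ}
    (ha : a ∈ indecomposables S) :
    coeff a (p * q) = coeff 0 p * coeff a q + coeff a p * coeff 0 q := by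
  classical
  obtain ⟨-, ha0, hirr⟩ := ha
  rw [coeff_mul, Finset.sum_eq_add_of_mem (0, a) (a, 0) (by simp) (by simp)
    (by simp [Prod.ext_iff, Ne.symm ha0])]
  rintro ⟨b, c⟩ hbc hne
  rw [Finset.HasAntidiagonal.mem_antidiagonal] at hbc
  by_cases hb : coeff b p = 0
  · simp [hb]
  by_cases hc : coeff c q = 0
  · simp [hc]
  rcases hirr b (hp (mem_support_iff.mpr hb)) c (hq (mem_support_iff.mpr hc)) hbc.symm
    with rfl | rfl <;> simp_all

noncomputable def coeffsOn [CommSemiring R] (T : Set (σ →₀ ℕ)) : MvPolynomial σ R →ₗ[R] T → R :=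
  LinearMap.pi fun a => lcoeff R a

lemma coeffsOn_apply [CommSemiring R] (T : Set (σ →₀ ℕ)) (p : MvPolynomial σ R) (a : T) :
    coeffsOn T p a = coeff a p := rfl

lemma coeffsOn_mem_span_of_mem_adjoin [CommSemiring R] {S T : Set (σ →₀ ℕ)} (hT : T ⊆ indecomposables S)
    {ι : Type*} (f : ι → MvPolynomial σ R)
    (hsupp : ∀ p ∈ Algebra.adjoin R (Set.range f), ↑p.support ⊆ S)
    {p : MvPolynomial σ R} (hp : p ∈ Algebra.adjoin R (Set.range f)) :
    coeffsOn T p ∈ Submodule.span R (Set.range (coeffsOn T ∘ f)) := by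
  classical
  induction hp using Algebra.adjoin_induction with
  | mem x hx =>
    obtain ⟨i, rfl⟩ := hx
    exact Submodule.subset_span ⟨i, rfl⟩
  | algebraMap r =>
    convert Submodule.zero_mem _
    ext a
    rw [coeffsOn_apply, Pi.zero_apply, algebraMap_eq, coeff_C, if_neg (hT a.2).2.1.symm]
  | add x y _ _ hx hy =>
    rw [map_add]
    exact Submodule.add_mem _ hx hy
  | mul x y hx' hy' hx hy =>
    have : coeffsOn T (x * y) = coeff 0 x • coeffsOn T y + coeff 0 y • coeffsOn T x := by
      ext a
      simp only [coeffsOn_apply, coeff_mul_of_mem_indecomposables (hsupp x hx') (hsupp y hy')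
        (hT a.2), Pi.add_apply, Pi.smul_apply, smul_eq_mul]
      ring
    rw [this]
    exact Submodule.add_mem _ (Submodule.smul_mem _ _ hy) (Submodule.smul_mem _ _ hx)

theorem ncard_indecomposables_le [CommRing R] [Nontrivial R] {S : Set (σ →₀ ℕ)} {s : ℕ} (f : Fin s → MvPolynomial σ R)
    (hsupp : ∀ p ∈ Algebra.adjoin R (Set.range f), ↑p.support ⊆ S)
    (hmon : ∀ a ∈ indecomposables S, monomial a 1 ∈ Algebra.adjoin R (Set.range f)) :
    (indecomposables S).ncard ≤ s := by
  classical
  set T := indecomposables S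
  rcases T.finite_or_infinite with hfin | hinf
  swap
  · simp [hinf.ncard]
  have := hfin.fintype
  have hspan : Submodule.span R (Set.range (coeffsOn T ∘ f)) = ⊤ := by
    rw [eq_top_iff, ← (Pi.basisFun R T).span_eq, Submodule.span_le]
    rintro _ ⟨a, rfl⟩
    have : coeffsOn T (monomial a (1 : R)) = Pi.basisFun R T a := by
      ext b
      simp [coeffsOn_apply, coeff_monomial, Pi.single_apply, Subtype.ext_iff, eq_comm]
    rw [SetLike.mem_coe, ← this]
    exact coeffsOn_mem_span_of_mem_adjoin le_rfl f hsupp (hmon a a.2)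
  have := finrank_le_of_span_eq_top hspan
  rwa [Module.finrank_pi, Fintype.card_fin, ← Nat.card_eq_fintype_card, Nat.card_coe_set_eq] at this

end Indecomposables

section LinearSubstitution

variable {ι R : Type*} [Fintype ι]

noncomputable def linSubst [CommSemiring R] (A : Matrix ι ι R) :
    MvPolynomial ι R →ₐ[R] MvPolynomial ι R :=
  aeval fun i => ∑ j, C (A i j) * X j

lemma linSubst_X [CommSemiring R] (A : Matrix ι ι R) (i : ι) :
    linSubst A (X i) = ∑ j, C (A i j) * X j :=
  aeval_X _ _

lemma linSubst_comp_linSubst [CommSemiring R] (A B : Matrix ι ι R) :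
    (linSubst A).comp (linSubst B) = linSubst (B * A) := by
  refine algHom_ext fun i => ?_
  rw [AlgHom.comp_apply, linSubst_X, linSubst_X, map_sum]
  simp only [map_mul, linSubst_X, ← algebraMap_eq, AlgHom.commutes, Matrix.mul_apply, map_sum,
    Finset.mul_sum, Finset.sum_mul, ← mul_assoc]
  exact Finset.sum_comm

lemma linSubst_one [CommSemiring R] [DecidableEq ι] :
    linSubst (1 : Matrix ι ι R) = AlgHom.id R _ :=
  algHom_ext fun i => by simp [linSubst_X, Matrix.one_apply]

noncomputable def linSubstEquiv [CommRing R] [DecidableEq ι] (A B : Matrix ι ι R) (h : A * B = 1) :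
    MvPolynomial ι R ≃ₐ[R] MvPolynomial ι R :=
  AlgEquiv.ofAlgHom (linSubst A) (linSubst B)
    (by rw [linSubst_comp_linSubst, mul_eq_one_comm.mp h, linSubst_one])
    (by rw [linSubst_comp_linSubst, h, linSubst_one])

end LinearSubstitution

section DiagonalDerivation

variable {σ R : Type*} [CommSemiring R] (c : σ → R)

noncomputable def diagonalDerivation : Derivation R (MvPolynomial σ R) (MvPolynomial σ R) :=
  mkDerivation R fun i => c i • X i

lemma diagonalDerivation_X (i : σ) : diagonalDerivation c (X i) = c i • X i :=
  mkDerivation_X _ _ _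

lemma diagonalDerivation_monomial (m : σ →₀ ℕ) (r : R) :
    diagonalDerivation c (monomial m r) = Finsupp.weight c m • monomial m r := by
  have hterm : ∀ i, monomial (m - Finsupp.single i 1) (m i : R) • (c i • X i)
      = (m i • c i) • monomial m (1 : R) := by
    intro i
    rw [← one_mul (m i : R), ← pderiv_monomial, smul_eq_mul, mul_smul_comm, mul_comm,
      X_mul_pderiv_monomial, smul_comm, smul_assoc]
  rw [diagonalDerivation, mkDerivation_monomial,
    Finsupp.sum_congr (g2 := fun i k => (k • c i) • monomial m (1 : R)) fun i _ => hterm i,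
    Finsupp.sum, ← Finset.sum_smul, Finsupp.weight_apply, Finsupp.sum, smul_comm, smul_monomial,
    smul_eq_mul, mul_one]

lemma coeff_diagonalDerivation (p : MvPolynomial σ R) (m : σ →₀ ℕ) :
    coeff m (diagonalDerivation c p) = Finsupp.weight c m * coeff m p := by
  classical
  induction p using MvPolynomial.induction_on' with
  | monomial s r =>
    rw [diagonalDerivation_monomial, coeff_smul, smul_eq_mul, coeff_monomial]
    split_ifs with h
    · rw [h]
    · simp
  | add p q hp hq => rw [map_add, coeff_add, coeff_add, hp, hq, mul_add]

lemma support_subset_of_diagonalDerivation_eq_zero [NoZeroDivisors R] {p : MvPolynomial σ R}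
    (hp : diagonalDerivation c p = 0) :
    (p.support : Set (σ →₀ ℕ)) ⊆ {m | Finsupp.weight c m = 0} := by
  intro m hm
  have h := coeff_diagonalDerivation c p m
  rw [hp, coeff_zero, eq_comm, mul_eq_zero] at h
  exact h.resolve_right (mem_support_iff.mp hm)

end DiagonalDerivation

section Fourier

variable {G k : Type*} [CommRing G] [Fintype G] [DecidableEq G] [Field k] (ψ : AddChar G k)

def fourierMatrix : Matrix G G k := Matrix.of fun i j => ψ (i * j)

lemma fourierMatrix_mul_eq_one (hψ : ψ.IsPrimitive) (hG : (Fintype.card G : k) ≠ 0) :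
    fourierMatrix ψ * ((Fintype.card G : k)⁻¹ • Matrix.of fun i j => ψ (-(i * j))) = 1 := by
  ext i l
  have hsum : ∑ j, ψ (i * j) * ψ (-(j * l)) = ∑ j, ψ (j * (i - l)) :=
    Finset.sum_congr rfl fun j _ => by rw [← AddChar.map_add_eq_mul]; ring_nf
  rw [Matrix.mul_smul, Matrix.smul_apply, Matrix.mul_apply]
  simp only [fourierMatrix, Matrix.of_apply]
  rw [hsum, AddChar.sum_mulShift _ hψ, Matrix.one_apply, smul_eq_mul]
  by_cases h : i = l
  · simp [h, hG]
  · simp [h, sub_eq_zero]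

noncomputable def fourierAlgEquiv (hψ : ψ.IsPrimitive) (hG : (Fintype.card G : k) ≠ 0) :
    MvPolynomial G k ≃ₐ[k] MvPolynomial G k :=
  linSubstEquiv _ _ (fourierMatrix_mul_eq_one ψ hψ hG)

lemma fourierAlgEquiv_X (hψ : ψ.IsPrimitive) (hG : (Fintype.card G : k) ≠ 0) (i : G) :
    fourierAlgEquiv ψ hψ hG (X i) = ∑ j, C (ψ (i * j)) * X j :=
  linSubst_X _ i

lemma fourierAlgEquiv_shift (hψ : ψ.IsPrimitive) (hG : (Fintype.card G : k) ≠ 0)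
    (d : Derivation k (MvPolynomial G k) (MvPolynomial G k)) (hd : ∀ j, d (X j) = X (j + 1))
    (p : MvPolynomial G k) :
    fourierAlgEquiv ψ hψ hG (d p) = diagonalDerivation ψ (fourierAlgEquiv ψ hψ hG p) := by
  set τ := fourierAlgEquiv ψ hψ hG
  have hX : ∀ i, τ (X (i + 1)) = diagonalDerivation ψ (τ (X i)) := by
    intro i
    simp only [τ, fourierAlgEquiv_X, map_sum, Derivation.leibniz, diagonalDerivation_X,
      derivation_C, smul_eq_mul, Algebra.smul_def, algebraMap_eq]
    refine Finset.sum_congr rfl fun j _ => ?_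
    rw [add_mul, AddChar.map_add_eq_mul, one_mul, C_mul]
    ring
  induction p using MvPolynomial.induction_on with
  | C a =>
    rw [← algebraMap_eq, Derivation.map_algebraMap, map_zero, AlgEquiv.commutes,
      Derivation.map_algebraMap]
  | add p q hp hq => rw [map_add, map_add, map_add, hp, hq, map_add]
  | mul_X p i hp =>
    rw [Derivation.leibniz, hd, map_add, smul_eq_mul, smul_eq_mul, map_mul, map_mul, hp, hX,
      map_mul, Derivation.leibniz, smul_eq_mul, smul_eq_mul, add_comm]


lemma mem_adjoin_fourierAlgEquiv_iff (hψ : ψ.IsPrimitive) (hG : (Fintype.card G : k) ≠ 0)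
    {d : Derivation k (MvPolynomial G k) (MvPolynomial G k)} (hd : ∀ j, d (X j) = X (j + 1))
    {ι : Type*} {f : ι → MvPolynomial G k}
    (hgen : {F | d F = 0} = ↑(Algebra.adjoin k (Set.range f))) (p : MvPolynomial G k) :
    p ∈ Algebra.adjoin k (Set.range (fourierAlgEquiv ψ hψ hG ∘ f)) ↔
      diagonalDerivation ψ p = 0 := by
  set τ := fourierAlgEquiv ψ hψ hG
  have hmap : p ∈ Algebra.adjoin k (Set.range (τ ∘ f)) ↔
      τ.symm p ∈ Algebra.adjoin k (Set.range f) := by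
    rw [Set.range_comp]
    change p ∈ Algebra.adjoin k ((τ : MvPolynomial G k →ₐ[k] MvPolynomial G k) '' Set.range f) ↔ _
    rw [← AlgHom.map_adjoin, Subalgebra.mem_map]
    constructor
    · rintro ⟨x, hx, rfl⟩
      simpa using hx
    · exact fun h => ⟨τ.symm p, h, τ.apply_symm_apply p⟩
  rw [hmap, ← SetLike.mem_coe, ← hgen, Set.mem_ofPred_eq, ← τ.toEquiv.injective.eq_iff,
    AlgEquiv.toEquiv_eq_coe, EquivLike.coe_coe, map_zero, fourierAlgEquiv_shift ψ hψ hG d hd,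
    AlgEquiv.apply_symm_apply]

end Fourier

section Cyclotomic

variable (n : ℕ) [NeZero n] {k : Type*} [Field k] {ε : k}

noncomputable def finExponentEquiv : (Fin n → ℕ) ≃+ (ZMod n →₀ ℕ) :=
  Finsupp.addEquivFunOnFinite.symm.trans (Finsupp.domCongr (ZMod.finEquiv n).toEquiv)

lemma finExponentEquiv_apply (α : Fin n → ℕ) (i : Fin n) :
    finExponentEquiv n α (ZMod.finEquiv n i) = α i := by
  simp only [finExponentEquiv, RingEquiv.toEquiv_eq_coe, AddEquiv.trans_apply,
    Finsupp.domCongr_apply, Finsupp.equivMapDomain_apply, EquivLike.coe_symm_apply_apply]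
  rfl

lemma zmodChar_finEquiv (hε : ε ^ n = 1) (i : Fin n) :
    AddChar.zmodChar n hε (ZMod.finEquiv n i) = ε ^ (i : ℕ) := by
  obtain ⟨m, rfl⟩ := Nat.exists_eq_succ_of_ne_zero (NeZero.ne n)
  -- `ZMod (m + 1)` is `Fin (m + 1)` and `ZMod.finEquiv` is the identity there
  rfl

lemma weight_zmodChar_finExponentEquiv (hε : ε ^ n = 1) (α : Fin n → ℕ) :
    Finsupp.weight (AddChar.zmodChar n hε) (finExponentEquiv n α) =
      ∑ i : Fin n, (α i : k) * ε ^ (i : ℕ) := by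
  rw [Finsupp.weight_eq_sum]
  refine (Fintype.sum_equiv (ZMod.finEquiv n).toEquiv _ _ fun i => ?_).symm
  simp only [RingEquiv.toEquiv_eq_coe, EquivLike.coe_coe]
  rw [finExponentEquiv_apply, zmodChar_finEquiv, nsmul_eq_mul]

lemma cycMonoid_eq_preimage (hε : ε ^ n = 1) :
    cycMonoid n ε = finExponentEquiv n ⁻¹' {m | Finsupp.weight (AddChar.zmodChar n hε) m = 0} := by
  ext α
  simp [cycMonoid, weight_zmodChar_finExponentEquiv]

end Cyclotomic

/-- If `f_1,…,f_s` generate the ring of constants `k[X]^d` of the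
cyclotomic derivation as a `k`-algebra, then `s ≥ ν(n)`, the number of minimal elements
of the monoid `M_n`. -/
theorem stmt_10 {k : Type*} [Field k] [CharZero k] (n : ℕ) (hn : 3 ≤ n)
    (ε : k) (hε : IsPrimitiveRoot ε n)
    (d : Derivation k (MvPolynomial (ZMod n) k) (MvPolynomial (ZMod n) k))
    (hd : ∀ j : ZMod n, d (X j) = X (j + 1))
    (s : ℕ) (f : Fin s → MvPolynomial (ZMod n) k)
    (hgen : {F : MvPolynomial (ZMod n) k | d F = 0} = ↑(Algebra.adjoin k (Set.range f))) :
    (cycMinimal n ε).ncard ≤ s := by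
  have : NeZero n := ⟨by omega⟩
  have hψ := AddChar.zmodChar_primitive_of_primitive_root n hε
  have hG : (Fintype.card (ZMod n) : k) ≠ 0 := by simp [ZMod.card, NeZero.ne n]
  have hconst := mem_adjoin_fourierAlgEquiv_iff _ hψ hG hd hgen
  rw [cycMinimal_eq_indecomposables, cycMonoid_eq_preimage n hε.pow_eq_one,
    indecomposables_preimage, Set.ncard_preimage_of_injective_subset_range
    (finExponentEquiv n).injective ((finExponentEquiv n).surjective.range_eq ▸ Set.subset_univ _)]
  refine ncard_indecomposables_le (fourierAlgEquiv _ hψ hG ∘ f) (fun p hp => ?_) (fun a ha => ?_)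
  · exact support_subset_of_diagonalDerivation_eq_zero _ ((hconst p).mp hp)
  · rw [hconst, diagonalDerivation_monomial, ha.1, zero_smul]
end

section
/- Let n = p^i q^j, where p ≠ q are primes and i, j ≥ 1. Then ν(n) = ξ(n) = p^{i−1} q^{j−1} (p + q): the monoid M_n has exactly p^{i−1} q^{j−1}(p+q) minimal elements. -/
open Polynomial

theorem Nat.exists_prime_dvd_div_of_mem_properDivisors {d n : ℕ} (hd : d ∈ n.properDivisors) :
    ∃ r, r.Prime ∧ r ∣ n ∧ d ∣ n / r := by
  obtain ⟨⟨e, rfl⟩, hlt⟩ := Nat.mem_properDivisors.mp hd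
  have he : e ≠ 1 := by rintro rfl; simp at hlt
  refine ⟨e.minFac, Nat.minFac_prime he, Dvd.dvd.mul_left e.minFac_dvd d, ?_⟩
  rw [Nat.mul_div_assoc d e.minFac_dvd]
  exact dvd_mul_right d _

theorem Nat.not_div_dvd_div_of_prime {n p q : ℕ} (hn : n ≠ 0) (hp : p.Prime) (hq : q.Prime)
    (hpn : p ∣ n) (hqn : q ∣ n) (hpq : p ≠ q) : ¬ n / p ∣ n / q := by
  intro h
  have h' : n / p * q ∣ n / p * p := by
    rw [Nat.div_mul_cancel hpn]
    simpa only [Nat.div_mul_cancel hqn] using Nat.mul_dvd_mul_right h q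
  have hqp := Nat.dvd_of_mul_dvd_mul_left (Nat.div_pos (Nat.le_of_dvd (Nat.pos_of_ne_zero hn) hpn)
    hp.pos) h'
  exact hpq ((Nat.prime_dvd_prime_iff_eq hq hp).mp hqp).symm

namespace Polynomial

theorem X_pow_sub_one_dvd_mul_cyclotomic (R : Type*) [CommRing R] {n m₁ m₂ : ℕ}
    (hn : 0 < n) (hm₁ : 0 < m₁) (hm₂ : 0 < m₂)
    (hd : ∀ d ∈ n.properDivisors, d ∣ m₁ ∨ d ∣ m₂) :
    (X ^ n - 1 : R[X]) ∣ (X ^ m₁ - 1) * (X ^ m₂ - 1) * cyclotomic n R := by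
  have hsub : n.properDivisors ⊆ m₁.divisors ∪ m₂.divisors := fun d hd' => by
    rcases hd d hd' with h | h
    · exact Finset.mem_union_left _ (Nat.mem_divisors.mpr ⟨h, hm₁.ne'⟩)
    · exact Finset.mem_union_right _ (Nat.mem_divisors.mpr ⟨h, hm₂.ne'⟩)
  have hunion : ∏ d ∈ m₁.divisors ∪ m₂.divisors, cyclotomic d R ∣
      (∏ d ∈ m₁.divisors, cyclotomic d R) * ∏ d ∈ m₂.divisors, cyclotomic d R :=
    Dvd.intro _ (Finset.prod_union_inter ..)
  rw [← prod_cyclotomic_eq_X_pow_sub_one hn, ← prod_cyclotomic_eq_X_pow_sub_one hm₁,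
    ← prod_cyclotomic_eq_X_pow_sub_one hm₂, ← Nat.cons_self_properDivisors hn.ne',
    Finset.prod_cons, mul_comm]
  exact mul_dvd_mul ((Finset.prod_dvd_prod_of_subset _ _ _ hsub).trans hunion) dvd_rfl

/-- The ring map `R[X] → R[ℤ/n]`, `X ↦ [1]`, which reduces exponents modulo `n`. -/
noncomputable def foldMod (R : Type*) [Semiring R] (n : ℕ) :
    R[X] →+* AddMonoidAlgebra R (ZMod n) :=
  (AddMonoidAlgebra.mapDomainRingHom R (Nat.castAddMonoidHom (ZMod n))).comp
    (toFinsuppIso R).toRingHom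

variable {R : Type*} {n : ℕ}

theorem foldMod_monomial [Semiring R] (j : ℕ) (a : R) :
    foldMod R n (monomial j a) = AddMonoidAlgebra.single (j : ZMod n) a := by
  simp [foldMod, toFinsuppIso, toFinsupp_monomial, AddMonoidAlgebra.mapDomain_single]

theorem foldMod_X_pow [Semiring R] (j : ℕ) :
    foldMod R n (X ^ j) = AddMonoidAlgebra.single (j : ZMod n) 1 := by
  rw [← monomial_one_right_eq_X_pow, foldMod_monomial]

theorem coeff_foldMod_add_add [CommRing R] {f : R[X]} {u v : ℕ}
    (h : (X ^ n - 1 : R[X]) ∣ (X ^ u - 1) * (X ^ v - 1) * f) (y : ZMod n) :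
    (foldMod R n f).coeff (y + u + v) + (foldMod R n f).coeff y =
      (foldMod R n f).coeff (y + u) + (foldMod R n f).coeff (y + v) := by
  obtain ⟨w, hw⟩ := h
  set F := foldMod R n f
  have hF : (AddMonoidAlgebra.single (u : ZMod n) (1 : R) - 1) *
      (AddMonoidAlgebra.single (v : ZMod n) 1 - 1) * F = 0 := by
    simpa [F, foldMod_X_pow, ← AddMonoidAlgebra.one_def] using congrArg (foldMod R n) hw
  have hshift := congrArg (AddMonoidAlgebra.coeff · (y + u + v))
    (show AddMonoidAlgebra.single (u : ZMod n) 1 * (AddMonoidAlgebra.single (v : ZMod n) 1 * F) + F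
      = AddMonoidAlgebra.single (u : ZMod n) 1 * F + AddMonoidAlgebra.single (v : ZMod n) 1 * F
      by linear_combination hF)
  simp only [AddMonoidAlgebra.coeff_add, Finsupp.add_apply,
    AddMonoidAlgebra.coeff_single_mul_apply, one_mul] at hshift
  rw [show -(v : ZMod n) + (-u + (y + u + v)) = y by abel,
    show -(u : ZMod n) + (y + u + v) = y + v by abel,
    show -(v : ZMod n) + (y + u + v) = y + u by abel] at hshift
  linear_combination hshift

end Polynomial

section CycMonoid

variable {n : ℕ} {k : Type*} [Field k] {ε : k}

noncomputable def cycPoly (α : Fin n → ℕ) : ℚ[X] := ∑ i : Fin n, monomial (i : ℕ) (α i : ℚ)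

def onZMod [NeZero n] (α : Fin n → ℕ) (y : ZMod n) : ℕ := α ⟨y.val, y.val_lt⟩

theorem onZMod_natCast [NeZero n] (α : Fin n → ℕ) (i : Fin n) : onZMod α (i : ℕ) = α i := by
  simp [onZMod, ZMod.val_natCast, Nat.mod_eq_of_lt i.isLt]

theorem coeff_foldMod_cycPoly [NeZero n] (α : Fin n → ℕ) (y : ZMod n) :
    (foldMod ℚ n (cycPoly α)).coeff y = onZMod α y := by
  rw [cycPoly, map_sum, AddMonoidAlgebra.coeff_sum, Finset.sum_apply',
    Fintype.sum_eq_single ⟨y.val, y.val_lt⟩]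
  · simp [foldMod_monomial, onZMod]
  · intro i hi
    rw [foldMod_monomial, AddMonoidAlgebra.coeff_single, Finsupp.single_eq_of_ne]
    contrapose! hi
    ext
    simp [hi, ZMod.val_natCast, Nat.mod_eq_of_lt i.isLt]

theorem aeval_cycPoly [CharZero k] (α : Fin n → ℕ) (ε : k) :
    aeval ε (cycPoly α) = ∑ i, (α i : k) * ε ^ (i : ℕ) := by
  simp [cycPoly, aeval_monomial]

theorem cyclotomic_dvd_cycPoly [CharZero k] [NeZero n] (hε : IsPrimitiveRoot ε n)
    {α : Fin n → ℕ} (hα : α ∈ cycMonoid n ε) : cyclotomic n ℚ ∣ cycPoly α := by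
  rw [cyclotomic_eq_minpoly_rat hε (NeZero.pos n)]
  exact minpoly.dvd ℚ ε ((aeval_cycPoly α ε).trans hα)

theorem onZMod_add_add [CharZero k] [NeZero n] (hε : IsPrimitiveRoot ε n) {α : Fin n → ℕ}
    (hα : α ∈ cycMonoid n ε) {u v : ℕ}
    (h : (X ^ n - 1 : ℚ[X]) ∣ (X ^ u - 1) * (X ^ v - 1) * cyclotomic n ℚ) (y : ZMod n) :
    onZMod α (y + u + v) + onZMod α y = onZMod α (y + u) + onZMod α (y + v) := by
  have := coeff_foldMod_add_add (h.trans (mul_dvd_mul_left _ (cyclotomic_dvd_cycPoly hε hα))) y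
  simp only [coeff_foldMod_cycPoly] at this
  exact_mod_cast this

theorem sub_mem_cycMonoid {α β : Fin n → ℕ} (hα : α ∈ cycMonoid n ε) (hβ : β ∈ cycMonoid n ε)
    (h : β ≤ α) : α - β ∈ cycMonoid n ε := by
  change ∑ i, (((α - β) i : ℕ) : k) * ε ^ (i : ℕ) = 0
  simp_rw [Pi.sub_apply, Nat.cast_sub (h _), sub_mul, Finset.sum_sub_distrib]
  rw [hα, hβ, sub_zero]

theorem cycMinimal_eq_of_isAntichain {C : Set (Fin n → ℕ)} (hC : C ⊆ cycMonoid n ε)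
    (hC0 : 0 ∉ C) (hanti : IsAntichain (· ≤ ·) C)
    (hdom : ∀ α ∈ cycMonoid n ε, α ≠ 0 → ∃ c ∈ C, c ≤ α) : cycMinimal n ε = C := by
  ext α
  constructor
  · rintro ⟨hα, h0, hirr⟩
    obtain ⟨c, hc, hcα⟩ := hdom α hα h0
    suffices α - c = 0 by rwa [le_antisymm (tsub_eq_zero_iff_le.mp this) hcα]
    by_contra hne
    exact hirr ⟨c, α - c, hC hc, sub_mem_cycMonoid hα (hC hc) hcα,
      fun h => hC0 (h ▸ hc), hne, (add_tsub_cancel_of_le hcα).symm⟩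
  · intro hα
    refine ⟨hC hα, fun h => hC0 (h ▸ hα), ?_⟩
    rintro ⟨β, γ, hβ, -, hβ0, hγ0, rfl⟩
    obtain ⟨c, hc, hcβ⟩ := hdom β hβ hβ0
    have hc_eq : c = β + γ := hanti.eq hc hα (hcβ.trans le_self_add)
    exact hγ0 (nonpos_iff_eq_zero.mp ((add_le_iff_nonpos_right β).mp (hc_eq ▸ hcβ)))

/-- The vertices `ε ^ s, ε ^ (s + m), ε ^ (s + 2m), …` of a regular `n / m`-gon. -/
def polygon (n m s : ℕ) : Fin n → ℕ := fun i => if (i : ℕ) % m = s then 1 else 0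

theorem polygon_ne_zero {m s : ℕ} (hs : s < m) (hsn : s < n) : polygon n m s ≠ 0 := fun h => by
  simpa [polygon, Nat.mod_eq_of_lt hs] using congrFun h ⟨s, hsn⟩

theorem polygon_mem_cycMonoid {m s : ℕ} (hε : IsPrimitiveRoot ε n) (hm : m ∈ n.properDivisors)
    (hs : s < m) : polygon n m s ∈ cycMonoid n ε := by
  obtain ⟨⟨r, rfl⟩, hmn⟩ := Nat.mem_properDivisors.mp hm
  have hm0 : m ≠ 0 := by rintro rfl; simp at hmn
  have hr : 1 < r := Nat.lt_of_mul_lt_mul_left (a := m) (by simpa using hmn)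
  have hζ : IsPrimitiveRoot (ε ^ m) r := by
    simpa [hm0] using hε.pow_of_dvd hm0 (dvd_mul_right m r)
  have hterm : ∀ (t : Fin r) (j : Fin m),
      ((polygon (m * r) m s (finCongr (mul_comm r m) (finProdFinEquiv (t, j))) : ℕ) : k) *
        ε ^ ((finCongr (mul_comm r m) (finProdFinEquiv (t, j)) : Fin (m * r)) : ℕ) =
      if j = ⟨s, hs⟩ then ε ^ s * (ε ^ m) ^ (t : ℕ) else 0 := by
    intro t j
    simp only [polygon, finCongr_apply, Fin.val_cast, finProdFinEquiv_apply_val,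
      Nat.add_mul_mod_self_left, Nat.mod_eq_of_lt j.isLt, Fin.ext_iff]
    split_ifs with h
    · rw [← h, pow_add, pow_mul, Nat.cast_one, one_mul]
    · rw [Nat.cast_zero, zero_mul]
  -- writing `i = j + m t`, the sum becomes `ε ^ s * ∑ t, (ε ^ m) ^ t`
  change ∑ i, _ = _
  rw [← (finProdFinEquiv.trans (finCongr (mul_comm r m))).sum_comp, Fintype.sum_prod_type]
  simp only [Equiv.trans_apply, hterm, Finset.sum_ite_eq', Finset.mem_univ, if_true]
  rw [← Finset.mul_sum, Fin.sum_univ_eq_sum_range (fun t => (ε ^ m) ^ t) r,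
    hζ.geom_sum_eq_zero hr, mul_zero]

theorem dvd_and_mod_eq_of_polygon_le {m m' s s' : ℕ} (hm' : m' ∈ n.properDivisors)
    (hs' : s' < m') (h : polygon n m' s' ≤ polygon n m s) : m ∣ m' ∧ s' % m = s := by
  have hmod : ∀ j (hj : j < n), j % m' = s' → j % m = s := fun j hj hjm => by
    have := h ⟨j, hj⟩
    simp only [polygon, if_pos hjm] at this
    split_ifs at this with hjs
    · exact hjs
    · omega
  have hn : 2 * m' ≤ n := by
    obtain ⟨r, hr, rfl⟩ := (Nat.mem_properDivisors_iff_exists (by rintro rfl; simp at hm')).mp hm'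
    nlinarith
  have h₁ := hmod s' (by omega) (Nat.mod_eq_of_lt hs')
  have h₂ := hmod (s' + m') (by omega) (by rw [Nat.add_mod_right, Nat.mod_eq_of_lt hs'])
  refine ⟨?_, h₁⟩
  simpa using (Nat.modEq_iff_dvd' (Nat.le_add_right s' m')).mp (h₁.trans h₂.symm)

theorem polygon_le_of_forall_one_le [NeZero n] {m : ℕ} (hm : m ∣ n) {α : Fin n → ℕ}
    (x : ZMod n) (h : ∀ t : ℕ, 1 ≤ onZMod α (x + (m * t : ℕ))) :
    polygon n m (x.val % m) ≤ α := by
  intro i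
  unfold polygon
  split_ifs with hi
  · have hle : x.val ≤ i + n := x.val_lt.le.trans (Nat.le_add_left n i)
    have hmod : x.val ≡ i + n [MOD m] :=
      hi.symm.trans ((Nat.modEq_zero_iff_dvd.mpr hm).symm.add_left (i : ℕ))
    obtain ⟨t, ht⟩ := (Nat.modEq_iff_dvd' hle).mp hmod
    have hx : x + (m * t : ℕ) = ((i : ℕ) : ZMod n) := calc
      x + (m * t : ℕ) = ((x.val + m * t : ℕ) : ZMod n) := by
        rw [Nat.cast_add, ZMod.natCast_zmod_val]
      _ = ((i + n : ℕ) : ZMod n) := by rw [← ht, Nat.add_sub_cancel' hle]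
      _ = i := by rw [Nat.cast_add, ZMod.natCast_self, add_zero]
    have := h t
    rwa [hx, onZMod_natCast] at this
  · exact Nat.zero_le _

theorem exists_polygon_le [CharZero k] [NeZero n] (hε : IsPrimitiveRoot ε n) {m₁ m₂ : ℕ}
    (hdvd : (X ^ n - 1 : ℚ[X]) ∣ (X ^ m₁ - 1) * (X ^ m₂ - 1) * cyclotomic n ℚ)
    (hm₁ : m₁ ∣ n) (hm₂ : m₂ ∣ n) {α : Fin n → ℕ} (hα : α ∈ cycMonoid n ε) (h0 : α ≠ 0) :
    (∃ s < m₁, polygon n m₁ s ≤ α) ∨ (∃ s < m₂, polygon n m₂ s ≤ α) := by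
  obtain ⟨i₀, hi₀⟩ := Function.ne_iff.mp h0
  set x : ZMod n := ((i₀ : ℕ) : ZMod n)
  have hx : 1 ≤ onZMod α x := by
    rw [onZMod_natCast]
    exact Nat.one_le_iff_ne_zero.mpr hi₀
  have hpar : ∀ s t : ℕ, onZMod α (x + (m₁ * s : ℕ) + (m₂ * t : ℕ)) + onZMod α x =
      onZMod α (x + (m₁ * s : ℕ)) + onZMod α (x + (m₂ * t : ℕ)) := fun s t =>
    onZMod_add_add hε hα (hdvd.trans (mul_dvd_mul_right (mul_dvd_mul
      (pow_one_sub_dvd_pow_mul_sub_one X m₁ s) (pow_one_sub_dvd_pow_mul_sub_one X m₂ t)) _)) x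
  have hpos : ∀ {m}, m ∣ n → 0 < m := fun h => Nat.pos_of_dvd_of_pos h (NeZero.pos n)
  by_cases h : ∀ t : ℕ, 1 ≤ onZMod α (x + (m₂ * t : ℕ))
  · exact Or.inr ⟨_, Nat.mod_lt _ (hpos hm₂), polygon_le_of_forall_one_le hm₂ x h⟩
  · obtain ⟨t, ht⟩ := not_forall.mp h
    refine Or.inl ⟨_, Nat.mod_lt _ (hpos hm₁), polygon_le_of_forall_one_le hm₁ x fun s => ?_⟩
    -- `α (x + m₂ t) = 0`, so `α (x + m₁ s) = α x + α (x + m₁ s + m₂ t) ≥ 1`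
    have := hpar s t
    omega

def polygonFamily (n m₁ m₂ : ℕ) : Fin m₁ ⊕ Fin m₂ → Fin n → ℕ :=
  Sum.elim (fun s => polygon n m₁ s) (fun s => polygon n m₂ s)

section PolygonFamily

variable {m₁ m₂ : ℕ} (hm₁ : m₁ ∈ n.properDivisors) (hm₂ : m₂ ∈ n.properDivisors)
  (h₁₂ : ¬ m₁ ∣ m₂) (h₂₁ : ¬ m₂ ∣ m₁)
include hm₁ hm₂ h₁₂ h₂₁

theorem eq_of_polygonFamily_le {a b : Fin m₁ ⊕ Fin m₂}
    (h : polygonFamily n m₁ m₂ a ≤ polygonFamily n m₁ m₂ b) : a = b := by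
  rcases a with s | s <;> rcases b with t | t <;>
    simp only [polygonFamily, Sum.elim_inl, Sum.elim_inr] at h
  · obtain ⟨-, hst⟩ := dvd_and_mod_eq_of_polygon_le hm₁ s.isLt h
    rw [Nat.mod_eq_of_lt s.isLt] at hst
    exact congrArg Sum.inl (Fin.ext hst)
  · exact absurd (dvd_and_mod_eq_of_polygon_le hm₁ s.isLt h).1 h₂₁
  · exact absurd (dvd_and_mod_eq_of_polygon_le hm₂ s.isLt h).1 h₁₂
  · obtain ⟨-, hst⟩ := dvd_and_mod_eq_of_polygon_le hm₂ s.isLt h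
    rw [Nat.mod_eq_of_lt s.isLt] at hst
    exact congrArg Sum.inr (Fin.ext hst)

theorem ncard_range_polygonFamily : (Set.range (polygonFamily n m₁ m₂)).ncard = m₁ + m₂ := by
  rw [Set.ncard_range_of_injective fun a b h => eq_of_polygonFamily_le hm₁ hm₂ h₁₂ h₂₁ h.le]
  simp

theorem cycMinimal_eq_range_polygonFamily [CharZero k] [NeZero n] (hε : IsPrimitiveRoot ε n)
    (hdvd : (X ^ n - 1 : ℚ[X]) ∣ (X ^ m₁ - 1) * (X ^ m₂ - 1) * cyclotomic n ℚ) :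
    cycMinimal n ε = Set.range (polygonFamily n m₁ m₂) := by
  have hlt : ∀ {m}, m ∈ n.properDivisors → m < n := fun h => (Nat.mem_properDivisors.mp h).2
  have hdvd' : ∀ {m}, m ∈ n.properDivisors → m ∣ n := fun h => (Nat.mem_properDivisors.mp h).1
  apply cycMinimal_eq_of_isAntichain
  · rintro _ ⟨s | s, rfl⟩
    · exact polygon_mem_cycMonoid hε hm₁ s.isLt
    · exact polygon_mem_cycMonoid hε hm₂ s.isLt
  · rintro ⟨s | s, hs⟩
    · exact polygon_ne_zero s.isLt (s.isLt.trans (hlt hm₁)) hs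
    · exact polygon_ne_zero s.isLt (s.isLt.trans (hlt hm₂)) hs
  · rintro _ ⟨a, rfl⟩ _ ⟨b, rfl⟩ hne hle
    exact hne (congrArg _ (eq_of_polygonFamily_le hm₁ hm₂ h₁₂ h₂₁ hle))
  · intro α hα h0
    rcases exists_polygon_le hε hdvd (hdvd' hm₁) (hdvd' hm₂) hα h0 with
      ⟨s, hs, h⟩ | ⟨s, hs, h⟩
    · exact ⟨_, ⟨Sum.inl ⟨s, hs⟩, rfl⟩, h⟩
    · exact ⟨_, ⟨Sum.inr ⟨s, hs⟩, rfl⟩, h⟩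

end PolygonFamily

theorem ncard_cycMinimal_of_primeFactors_eq_pair [CharZero k] {p q : ℕ}
    (hε : IsPrimitiveRoot ε n) (hpq : p ≠ q) (hn : n.primeFactors = {p, q}) :
    (cycMinimal n ε).ncard = n / p + n / q := by
  obtain ⟨hp, hpn, hn0⟩ := Nat.mem_primeFactors.mp (show p ∈ n.primeFactors by simp [hn])
  obtain ⟨hq, hqn, -⟩ := Nat.mem_primeFactors.mp (show q ∈ n.primeFactors by simp [hn])
  have : NeZero n := ⟨hn0⟩
  have hmem : ∀ {r}, r.Prime → r ∣ n → n / r ∈ n.properDivisors := fun hr hrn =>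
    Nat.mem_properDivisors.mpr
      ⟨Nat.div_dvd_of_dvd hrn, Nat.div_lt_self (Nat.pos_of_ne_zero hn0) hr.one_lt⟩
  have hdvd : (X ^ n - 1 : ℚ[X]) ∣ (X ^ (n / p) - 1) * (X ^ (n / q) - 1) * cyclotomic n ℚ := by
    refine X_pow_sub_one_dvd_mul_cyclotomic ℚ (NeZero.pos n)
      (Nat.pos_of_mem_properDivisors (hmem hp hpn)) (Nat.pos_of_mem_properDivisors (hmem hq hqn))
      fun d hd => ?_
    obtain ⟨r, hr, hrn, hdr⟩ := Nat.exists_prime_dvd_div_of_mem_properDivisors hd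
    have hr' : r ∈ n.primeFactors := Nat.mem_primeFactors.mpr ⟨hr, hrn, hn0⟩
    rw [hn, Finset.mem_insert, Finset.mem_singleton] at hr'
    rcases hr' with rfl | rfl
    exacts [Or.inl hdr, Or.inr hdr]
  have h₁₂ := Nat.not_div_dvd_div_of_prime hn0 hp hq hpn hqn hpq
  have h₂₁ := Nat.not_div_dvd_div_of_prime hn0 hq hp hqn hpn hpq.symm
  rw [cycMinimal_eq_range_polygonFamily (hmem hp hpn) (hmem hq hqn) h₁₂ h₂₁ hε hdvd,
    ncard_range_polygonFamily (hmem hp hpn) (hmem hq hqn) h₁₂ h₂₁]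

end CycMonoid

theorem stmt_16_general {k : Type*} [Field k] [CharZero k] (n : ℕ)
    (p q i j : ℕ) (hp : p.Prime) (hq : q.Prime) (hpq : p ≠ q)
    (hi : 1 ≤ i) (hj : 1 ≤ j) (hnpq : n = p ^ i * q ^ j)
    (ε : k) (hε : IsPrimitiveRoot ε n) :
    (cycMinimal n ε).ncard = p ^ (i - 1) * q ^ (j - 1) * (p + q) ∧
    (∑ r ∈ n.primeFactors, n / r) = p ^ (i - 1) * q ^ (j - 1) * (p + q) := by
  have hfac : n.primeFactors = {p, q} := by
    rw [hnpq, Nat.primeFactors_mul (pow_pos hp.pos i).ne' (pow_pos hq.pos j).ne',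
      Nat.primeFactors_prime_pow (by omega) hp, Nat.primeFactors_prime_pow (by omega) hq]
    rfl
  have hsum : n / p + n / q = p ^ (i - 1) * q ^ (j - 1) * (p + q) := by
    obtain ⟨i, rfl⟩ : ∃ i', i = i' + 1 := ⟨i - 1, by omega⟩
    obtain ⟨j, rfl⟩ : ∃ j', j = j' + 1 := ⟨j - 1, by omega⟩
    rw [Nat.div_eq_of_eq_mul_left hp.pos (show n = p ^ i * q ^ (j + 1) * p by rw [hnpq]; ring),
      Nat.div_eq_of_eq_mul_left hq.pos (show n = p ^ (i + 1) * q ^ j * q by rw [hnpq]; ring)]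
    simp only [Nat.add_sub_cancel]
    ring
  refine ⟨(ncard_cycMinimal_of_primeFactors_eq_pair hε hpq hfac).trans hsum, ?_⟩
  rw [hfac, Finset.sum_pair hpq, hsum]

/-- Let `n = p^i q^j` with `p ≠ q` primes and `i, j ≥ 1`. Then
`ν(n) = ξ(n) = p^{i-1} q^{j-1} (p + q)`: the monoid `M_n` has exactly
`p^{i-1} q^{j-1} (p + q)` minimal elements. -/
theorem stmt_16 {k : Type*} [Field k] [CharZero k] (n : ℕ) (hn : 3 ≤ n)
    (p q i j : ℕ) (hp : p.Prime) (hq : q.Prime) (hpq : p ≠ q)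
    (hi : 1 ≤ i) (hj : 1 ≤ j) (hnpq : n = p ^ i * q ^ j)
    (ε : k) (hε : IsPrimitiveRoot ε n) :
    (cycMinimal n ε).ncard = p ^ (i - 1) * q ^ (j - 1) * (p + q) ∧
    (∑ r ∈ n.primeFactors, n / r) = p ^ (i - 1) * q ^ (j - 1) * (p + q) :=
  stmt_16_general n p q i j hp hq hpq hi hj hnpq ε hε
end
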